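/- For every T ∈ W, the tensor C[T] satisfies: (i) C[T](a,b,c) = −C[T](a,c,b) (antisymmetry in the last two arguments); (ii) C[T](a,b,c) + C[T](b,c,a) + C[T](c,a,b) = 0 (vanishing cyclic sum, equivalently vanishing total antisymmetrization); (iii) the g-trace of C[T] over its first two arguments vanishes, Σ_{i,j} g^{ij} C[T](e_i, e_j, c) = 0 for all c (equivalently μ_{C[T]} = 0). In other words, C maps W into the hook subspace H. -/
import Mathlib

noncomputable section
open Matrix

/-- The `g`-trace `μ_T` of a trilinear tensor `T` over its first and third slots,
computed with the inverse metric components `ginv`: `μ_T(c) = Σᵢⱼ g^{ij} T(eᵢ, c, eⱼ)`. -/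
def muTr (n : ℕ) (ginv : Matrix (Fin n) (Fin n) ℝ)
    (T : Fin n → Fin n → Fin n → ℝ) (c : Fin n) : ℝ :=
  ∑ i, ∑ j, ginv i j * T i c j

/-- The algebraic conformal Killing–Yano projector:
`C[T](a,b,c) = 2T(a,b,c) − T(b,c,a) + T(c,b,a) + (3/(n−1))(g(a,b)μ_T(c) − g(c,a)μ_T(b))`. -/
def cykOp (n : ℕ) (g ginv : Matrix (Fin n) (Fin n) ℝ)
    (T : Fin n → Fin n → Fin n → ℝ) : Fin n → Fin n → Fin n → ℝ :=
  fun a b c => 2 * T a b c - T b c a + T c b a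
    + (3 / ((n : ℝ) - 1)) * (g a b * muTr n ginv T c - g c a * muTr n ginv T b)

/-- The antisymmetrizer `A[T](a,b,c) = 2(T(a,b,c) + T(b,c,a) + T(c,a,b))`. -/
def asymOp (n : ℕ) (T : Fin n → Fin n → Fin n → ℝ) : Fin n → Fin n → Fin n → ℝ :=
  fun a b c => 2 * (T a b c + T b c a + T c a b)

/-- For every tensor `T` antisymmetric in its last two arguments, `C[T]` lies in the
hook subspace `H`: it is antisymmetric in its last two arguments, its cyclic sum
vanishes, and its `g`-traces vanish. -/
theorem cykOp_mem_hook (n : ℕ) (hn : 3 ≤ n)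
    (g ginv : Matrix (Fin n) (Fin n) ℝ)
    (hsymm : ∀ i j, g i j = g j i)
    (hinv : g * ginv = 1) (hinv' : ginv * g = 1)
    (T : Fin n → Fin n → Fin n → ℝ)
    (hT : ∀ a b c, T a b c = -(T a c b)) :
    (∀ a b c, cykOp n g ginv T a b c = -(cykOp n g ginv T a c b)) ∧
    (∀ a b c, cykOp n g ginv T a b c + cykOp n g ginv T b c a
        + cykOp n g ginv T c a b = 0) ∧
    (∀ c, ∑ i, ∑ j, ginv i j * cykOp n g ginv T i j c = 0) ∧
    (∀ c, muTr n ginv (cykOp n g ginv T) c = 0) := by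
  set k : ℝ := 3 / ((n : ℝ) - 1) with hk
  set μ : Fin n → ℝ := muTr n ginv T with hμ
  have hn1 : ((n : ℝ) - 1) ≠ 0 := by
    have : (3 : ℝ) ≤ (n : ℝ) := by exact_mod_cast hn
    linarith
  -- symmetry of ginv
  have hg_t : gᵀ = g := Matrix.ext fun i j => hsymm j i
  have hinvT : ginvᵀ * g = 1 := by
    have := congrArg Matrix.transpose hinv
    simpa [Matrix.transpose_mul, hg_t] using this
  have hginvT : ginvᵀ = ginv := by
    calc ginvᵀ = ginvᵀ * (g * ginv) := by rw [hinv, Matrix.mul_one]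
      _ = (ginvᵀ * g) * ginv := by rw [Matrix.mul_assoc]
      _ = ginv := by rw [hinvT, Matrix.one_mul]
  have hgs : ∀ i j, ginv i j = ginv j i := by
    intro i j
    have := congrFun (congrFun hginvT i) j
    simpa [Matrix.transpose_apply] using this.symm
  -- L1 : first-two trace of T
  have L1 : ∀ c, ∑ i, ∑ j, ginv i j * T i j c = -μ c := by
    intro c
    have h : ∀ i j : Fin n, ginv i j * T i j c = -(ginv i j * T i c j) := by
      intro i j; rw [hT i j c]; ring
    simp only [h, Finset.sum_neg_distrib]
    rfl
  -- L2 : ∑ ginv i j * T j c i = μ c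
  have L2 : ∀ c, ∑ i, ∑ j, ginv i j * T j c i = μ c := by
    intro c
    rw [Finset.sum_comm]
    have h : ∀ j i : Fin n, ginv i j * T j c i = ginv j i * T j c i := by
      intro j i; rw [hgs]
    calc ∑ j, ∑ i, ginv i j * T j c i = ∑ j, ∑ i, ginv j i * T j c i := by
          exact Finset.sum_congr rfl fun j _ => Finset.sum_congr rfl fun i _ => h j i
      _ = μ c := rfl
  -- L3 : ∑ ginv i j * T c j i = 0
  have L3 : ∀ c, ∑ i, ∑ j, ginv i j * T c j i = 0 := by
    intro c
    have h1 : (∑ i, ∑ j, ginv i j * T c j i) = -(∑ i, ∑ j, ginv i j * T c i j) := by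
      rw [← Finset.sum_neg_distrib]
      refine Finset.sum_congr rfl fun i _ => ?_
      rw [← Finset.sum_neg_distrib]
      refine Finset.sum_congr rfl fun j _ => ?_
      rw [hT c j i]; ring
    have h2 : (∑ i, ∑ j, ginv i j * T c j i) = ∑ i, ∑ j, ginv i j * T c i j := by
      rw [Finset.sum_comm]
      refine Finset.sum_congr rfl fun j _ => Finset.sum_congr rfl fun i _ => ?_
      rw [hgs]
    linarith [h1, h2]
  -- L4 : full trace of metric
  have L4 : ∑ i, ∑ j, ginv i j * g i j = (n : ℝ) := by
    have := congrArg Matrix.trace hinv'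
    simp only [Matrix.trace, Matrix.diag, Matrix.mul_apply, Matrix.trace_one] at this
    simp only [Matrix.one_apply_eq] at this
    rw [Finset.sum_const, Finset.card_univ, Fintype.card_fin, nsmul_eq_mul, mul_one] at this
    rw [← this]
    refine Finset.sum_congr rfl fun i _ => Finset.sum_congr rfl fun j _ => ?_
    rw [hsymm]
  -- L5 : contraction with metric
  have L5 : ∀ (c : Fin n) (f : Fin n → ℝ), ∑ i, ∑ j, ginv i j * (g c i * f j) = f c := by
    intro c f
    rw [Finset.sum_comm]
    have h : ∀ j : Fin n, (∑ i, ginv i j * (g c i * f j)) = (g * ginv) c j * f j := by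
      intro j
      rw [Matrix.mul_apply, Finset.sum_mul]
      refine Finset.sum_congr rfl fun i _ => by ring
    simp only [h, hinv, Matrix.one_apply]
    simp
  have key34 : ∀ c, (∑ i, ∑ j, ginv i j * cykOp n g ginv T i j c = 0)
      ∧ muTr n ginv (cykOp n g ginv T) c = 0 := by
    intro c
    have expand3 : ∀ i j : Fin n, ginv i j * cykOp n g ginv T i j c =
        2 * (ginv i j * T i j c) - ginv i j * T j c i + ginv i j * T c j i
          + (k * μ c) * (ginv i j * g i j) - k * (ginv i j * (g c i * μ j)) := by
      intro i j; simp only [cykOp, hμ, hk]; ring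
    have expand4 : ∀ i j : Fin n, ginv i j * cykOp n g ginv T i c j =
        2 * (ginv i j * T i c j) - ginv i j * T c j i + ginv i j * T j c i
          + k * (ginv i j * (g c i * μ j)) - (k * μ c) * (ginv i j * g j i) := by
      intro i j
      simp only [cykOp, hμ, hk]
      rw [hsymm i c, hsymm j i]
      ring
    constructor
    · calc ∑ i, ∑ j, ginv i j * cykOp n g ginv T i j c
          = ∑ i, ∑ j, (2 * (ginv i j * T i j c) - ginv i j * T j c i + ginv i j * T c j i
            + (k * μ c) * (ginv i j * g i j) - k * (ginv i j * (g c i * μ j))) := by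
            exact Finset.sum_congr rfl fun i _ => Finset.sum_congr rfl fun j _ => expand3 i j
        _ = 2 * (∑ i, ∑ j, ginv i j * T i j c) - (∑ i, ∑ j, ginv i j * T j c i)
            + (∑ i, ∑ j, ginv i j * T c j i) + (k * μ c) * (∑ i, ∑ j, ginv i j * g i j)
            - k * (∑ i, ∑ j, ginv i j * (g c i * μ j)) := by
            simp only [Finset.sum_add_distrib, Finset.sum_sub_distrib, ← Finset.mul_sum]
        _ = 0 := by
            rw [L1, L2, L3, L4, L5]
            have hk3 : k * ((n : ℝ) - 1) = 3 := by
              rw [hk]; field_simp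
            linear_combination μ c * hk3
    · have hμeq : (∑ i, ∑ j, ginv i j * g j i) = (n : ℝ) := by
        rw [← L4]
        refine Finset.sum_congr rfl fun i _ => Finset.sum_congr rfl fun j _ => ?_
        rw [hsymm]
      calc muTr n ginv (cykOp n g ginv T) c
          = ∑ i, ∑ j, (2 * (ginv i j * T i c j) - ginv i j * T c j i + ginv i j * T j c i
            + k * (ginv i j * (g c i * μ j)) - (k * μ c) * (ginv i j * g j i)) := by
            exact Finset.sum_congr rfl fun i _ => Finset.sum_congr rfl fun j _ => expand4 i j
        _ = 2 * (∑ i, ∑ j, ginv i j * T i c j) - (∑ i, ∑ j, ginv i j * T c j i)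
            + (∑ i, ∑ j, ginv i j * T j c i) + k * (∑ i, ∑ j, ginv i j * (g c i * μ j))
            - (k * μ c) * (∑ i, ∑ j, ginv i j * g j i) := by
            simp only [Finset.sum_add_distrib, Finset.sum_sub_distrib, ← Finset.mul_sum]
        _ = 0 := by
            rw [L3, L2, L5, hμeq]
            have hk3 : k * ((n : ℝ) - 1) = 3 := by
              rw [hk]; field_simp
            have L0 : (∑ i, ∑ j, ginv i j * T i c j) = μ c := rfl
            rw [L0]
            linear_combination (-μ c) * hk3
  refine ⟨?_, ?_, fun c => (key34 c).1, fun c => (key34 c).2⟩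
  · intro a b c
    have : cykOp n g ginv T a b c + cykOp n g ginv T a c b = 0 := by
      simp only [cykOp]
      rw [hT a b c, hsymm a b, hsymm c a]
      ring
    linarith
  · intro a b c
    simp only [cykOp]
    rw [hT c b a, hT a c b, hT b a c, hsymm b c, hsymm a b, hsymm c a]
    ring
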